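/- Let Ω ∈ L^{q'}(S_{Q-1}) with 1 < q < ∞, γ > -Q, λ ∈ (-1/q, 0), Φ : (0,∞) → [0,∞) measurable, and let H_{Φ,Ω} f(x) = ∫_0^∞ ∫_{S_{Q-1}} (Φ(t)/t) Ω(y') f(δ_{t^{-1}|x|_h} y') dσ(y') dt. For f(x) = |x|_h^{(Q+γ)λ} |Ω(δ_{|x|_h^{-1}}x)|^{q'-2} \overline{Ω}(δ_{|x|_h^{-1}}x), one has H_{Φ,Ω} f(x) = ‖Ω‖_{L^{q'}(S_{Q-1})}^{q'} (∫_0^∞ Φ(t) t^{-1-(Q+γ)λ} dt) · |x|_h^{(Q+γ)λ} for all x ≠ 0. -/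

import Mathlib

open MeasureTheory ENNReal Set

noncomputable section

/-- Heisenberg dilation: scales the first `2n` coordinates by `r` and the last by `r²`. -/
def dil (n : ℕ) (r : ℝ) (x : Fin (2*n+1) → ℝ) : Fin (2*n+1) → ℝ :=
  fun i => if i.val < 2*n then r * x i else r^2 * x i

/-- Homogeneous (Korányi) norm on the Heisenberg group `Hⁿ = ℝ^{2n+1}`. -/
def hnorm (n : ℕ) (x : Fin (2*n+1) → ℝ) : ℝ :=
  ((∑ i : Fin (2*n+1), if i.val < 2*n then (x i)^2 else (0:ℝ))^2
    + (x ⟨2*n, by omega⟩)^2) ^ ((1:ℝ)/4)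

/-- Closed ball `B_R = {|x|_h ≤ R}`. -/
def hball (n : ℕ) (R : ℝ) : Set (Fin (2*n+1) → ℝ) := {x | hnorm n x ≤ R}

/-- The rough Hausdorff operator on the Heisenberg group:
`H_{Φ,Ω} f(x) = ∫_0^∞ ∫_{S_{Q-1}} (Φ(t)/t) Ω(y') f(δ_{t⁻¹|x|_h} y') dσ(y') dt`. -/
def roughHausdorff (n : ℕ) (Φ : ℝ → ℝ) (Ω : (Fin (2*n+1) → ℝ) → ℂ)
    (σ : Measure (Fin (2*n+1) → ℝ)) (f : (Fin (2*n+1) → ℝ) → ℂ)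
    (x : Fin (2*n+1) → ℝ) : ℂ :=
  ∫ t in Ioi (0:ℝ), ∫ y, (Φ t / t) • (Ω y * f (dil n (hnorm n x / t) y)) ∂σ

/-!
For `|y'|_h = 1` the normalisation `δ_{|·|_h⁻¹}` undoes the dilation `δ_{|x|_h/t}`, so on the
sphere `Ω(y') f(δ_{|x|_h/t} y') = (|x|_h/t)^a |Ω(y')|^p` with `a = (Q+γ)λ`, `p = q'`. The inner
integral is therefore a constant multiple of `∫ |Ω|^p dσ`, and after the change of scale
`Φ(t)/t · (|x|_h/t)^a = |x|_h^a Φ(t) t^{-1-a}` the outer integral factors as well.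
-/

def testFunction (n : ℕ) (a p : ℝ) (Ω : (Fin (2*n+1) → ℝ) → ℂ) (x : Fin (2*n+1) → ℝ) : ℂ :=
  (((hnorm n x ^ a * ‖Ω (dil n (hnorm n x)⁻¹ x)‖ ^ (p - 2) : ℝ) : ℂ) *
    (starRingEnd ℂ) (Ω (dil n (hnorm n x)⁻¹ x)))

lemma dil_dil (n : ℕ) (a b : ℝ) (x : Fin (2*n+1) → ℝ) :
    dil n a (dil n b x) = dil n (a * b) x := by
  funext i; unfold dil; split <;> ring

lemma dil_one (n : ℕ) (x : Fin (2*n+1) → ℝ) : dil n 1 x = x := by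
  funext i; unfold dil; split <;> ring

lemma hnorm_pos (n : ℕ) {x : Fin (2*n+1) → ℝ} (hx : x ≠ 0) : 0 < hnorm n x := by
  obtain ⟨i, hi⟩ := Function.ne_iff.mp hx
  have hi : x i ≠ 0 := hi
  unfold hnorm
  apply Real.rpow_pos_of_pos
  by_cases h : (i : ℕ) < 2*n
  · have hS : 0 < ∑ j : Fin (2*n+1), if (j : ℕ) < 2*n then (x j)^2 else (0:ℝ) :=
      lt_of_lt_of_le (by simp only [h, if_true]; positivity)
        (Finset.single_le_sum (f := fun j : Fin (2*n+1) => if (j : ℕ) < 2*n then (x j)^2 else 0)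
          (fun j _ => by positivity) (Finset.mem_univ i))
    positivity
  · have hlast : i = ⟨2*n, by omega⟩ := Fin.ext (by have := i.isLt; simp only []; omega)
    have : x ⟨2*n, by omega⟩ ≠ 0 := hlast ▸ hi
    positivity

lemma hnorm_dil (n : ℕ) {r : ℝ} (hr : 0 ≤ r) (x : Fin (2*n+1) → ℝ) :
    hnorm n (dil n r x) = r * hnorm n x := by
  unfold hnorm dil
  have hsum : (∑ i : Fin (2*n+1), if (i : ℕ) < 2*n then
        (if (i : ℕ) < 2*n then r * x i else r^2 * x i)^2 else (0:ℝ))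
      = r^2 * ∑ i : Fin (2*n+1), if (i : ℕ) < 2*n then (x i)^2 else (0:ℝ) := by
    rw [Finset.mul_sum]
    refine Finset.sum_congr rfl fun i _ => ?_
    split_ifs <;> ring
  rw [hsum, if_neg (by simp)]
  set S := ∑ i : Fin (2*n+1), if (i : ℕ) < 2*n then (x i)^2 else (0:ℝ)
  rw [show (r^2 * S)^2 + (r^2 * x ⟨2*n, by omega⟩)^2 = r^4 * (S^2 + (x ⟨2*n, by omega⟩)^2) by ring,
    Real.mul_rpow (by positivity) (by positivity), ← Real.rpow_natCast r 4, ← Real.rpow_mul hr]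
  norm_num

lemma dil_inv_hnorm_dil (n : ℕ) {r : ℝ} (hr : 0 < r) {y : Fin (2*n+1) → ℝ} (hy : hnorm n y = 1) :
    dil n (hnorm n (dil n r y))⁻¹ (dil n r y) = y := by
  rw [hnorm_dil n hr.le, hy, mul_one, dil_dil, inv_mul_cancel₀ hr.ne', dil_one]

-- `p ≠ 0` matters at `z = 0`: for `p = 0` the right side would be `c * 0 ^ 0 = c`.
lemma mul_norm_rpow_sub_two_mul_conj {p : ℝ} (hp : p ≠ 0) (c : ℝ) (z : ℂ) :
    z * (((c * ‖z‖ ^ (p - 2) : ℝ) : ℂ) * (starRingEnd ℂ) z) = ((c * ‖z‖ ^ p : ℝ) : ℂ) := by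
  rcases eq_or_ne z 0 with rfl | hz
  · simp [Real.zero_rpow hp]
  · have hz' : 0 < ‖z‖ := norm_pos_iff.mpr hz
    rw [mul_left_comm, Complex.mul_conj, Complex.normSq_eq_norm_sq, ← Complex.ofReal_mul,
      mul_assoc, ← Real.rpow_natCast, ← Real.rpow_add hz']
    norm_num

lemma mul_testFunction_dil (n : ℕ) {a p : ℝ} (hp : p ≠ 0) (Ω : (Fin (2*n+1) → ℝ) → ℂ)
    {r : ℝ} (hr : 0 < r) {y : Fin (2*n+1) → ℝ} (hy : hnorm n y = 1) :
    Ω y * testFunction n a p Ω (dil n r y) = ((r ^ a * ‖Ω y‖ ^ p : ℝ) : ℂ) := by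
  rw [testFunction, dil_inv_hnorm_dil n hr hy, hnorm_dil n hr.le, hy, mul_one,
    mul_norm_rpow_sub_two_mul_conj hp]

lemma integral_smul_mul_testFunction_dil (n : ℕ) {a p : ℝ} (hp : p ≠ 0)
    (Ω : (Fin (2*n+1) → ℝ) → ℂ) {σ : Measure (Fin (2*n+1) → ℝ)} (hσ : ∀ᵐ y ∂σ, hnorm n y = 1)
    (c : ℝ) {r : ℝ} (hr : 0 < r) :
    ∫ y, c • (Ω y * testFunction n a p Ω (dil n r y)) ∂σ
      = ((c * r ^ a * ∫ y, ‖Ω y‖ ^ p ∂σ : ℝ) : ℂ) := by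
  have hae : ∀ᵐ y ∂σ, c • (Ω y * testFunction n a p Ω (dil n r y))
      = (c * r ^ a) • ((‖Ω y‖ ^ p : ℝ) : ℂ) := by
    filter_upwards [hσ] with y hy
    rw [mul_testFunction_dil n hp Ω hr hy, Complex.real_smul, Complex.real_smul]
    push_cast
    ring
  rw [integral_congr_ae hae, integral_smul, integral_complex_ofReal, Complex.real_smul,
    ← Complex.ofReal_mul]

lemma div_mul_div_rpow_eq {R t : ℝ} (hR : 0 ≤ R) (ht : 0 < t) (φ a : ℝ) :
    φ / t * (R / t) ^ a = R ^ a * (φ * t ^ (-1 - a)) := by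
  rw [Real.div_rpow hR ht.le, sub_eq_add_neg, Real.rpow_add ht, Real.rpow_neg_one,
    Real.rpow_neg ht.le]
  have : t ^ a ≠ 0 := (Real.rpow_pos_of_pos ht a).ne'
  field_simp

theorem roughHausdorff_testFunction (n : ℕ) {a p : ℝ} (hp : p ≠ 0) (Φ : ℝ → ℝ)
    (Ω : (Fin (2*n+1) → ℝ) → ℂ) {σ : Measure (Fin (2*n+1) → ℝ)} (hσ : ∀ᵐ y ∂σ, hnorm n y = 1)
    {x : Fin (2*n+1) → ℝ} (hx : x ≠ 0) :
    roughHausdorff n Φ Ω σ (testFunction n a p Ω) x =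
      (((∫ y, ‖Ω y‖ ^ p ∂σ) * (∫ t in Ioi (0:ℝ), Φ t * t ^ (-1 - a)) * hnorm n x ^ a : ℝ) : ℂ) := by
  have hR := hnorm_pos n hx
  have hinner : ∀ t ∈ Ioi (0:ℝ),
      ∫ y, (Φ t / t) • (Ω y * testFunction n a p Ω (dil n (hnorm n x / t) y)) ∂σ
        = (((∫ y, ‖Ω y‖ ^ p ∂σ) * hnorm n x ^ a * (Φ t * t ^ (-1 - a)) : ℝ) : ℂ) := by
    intro t ht
    rw [integral_smul_mul_testFunction_dil n hp Ω hσ _ (div_pos hR ht),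
      div_mul_div_rpow_eq hR.le ht]
    congr 1
    ring
  rw [roughHausdorff, setIntegral_congr_fun measurableSet_Ioi hinner, integral_complex_ofReal,
    integral_const_mul]
  congr 1
  ring

theorem roughHausdorff_test_function_general (n : ℕ) (q γ lam : ℝ) (hq : 1 < q)
    (σ : Measure (Fin (2*n+1) → ℝ))
    (hσ : ∀ᵐ y ∂σ, hnorm n y = 1)
    (Φ : ℝ → ℝ)
    (Ω : (Fin (2*n+1) → ℝ) → ℂ)
    (f : (Fin (2*n+1) → ℝ) → ℂ)
    (hf : ∀ x, f x = (((hnorm n x ^ (((2*(n:ℝ)+2)+γ) * lam) *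
            ‖Ω (dil n (hnorm n x)⁻¹ x)‖ ^ (q/(q-1) - 2) : ℝ) : ℂ) *
          (starRingEnd ℂ) (Ω (dil n (hnorm n x)⁻¹ x)))) :
    ∀ x : Fin (2*n+1) → ℝ, x ≠ 0 →
      roughHausdorff n Φ Ω σ f x =
        (((∫ y, ‖Ω y‖ ^ (q/(q-1)) ∂σ) *
            (∫ t in Ioi (0:ℝ), Φ t * t ^ (-1 - ((2*(n:ℝ)+2) + γ) * lam)) *
            hnorm n x ^ (((2*(n:ℝ)+2) + γ) * lam) : ℝ) : ℂ) := by
  intro x hx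
  obtain rfl : f = testFunction n (((2*(n:ℝ)+2) + γ) * lam) (q/(q-1)) Ω := funext hf
  exact roughHausdorff_testFunction n (div_pos (by linarith) (by linarith)).ne' Φ Ω hσ hx

/-- for the test function
`f(x) = |x|_h^{(Q+γ)λ} |Ω(δ_{|x|_h⁻¹}x)|^{q'-2} conj(Ω(δ_{|x|_h⁻¹}x))` one has
`H_{Φ,Ω}f(x) = ‖Ω‖_{L^{q'}}^{q'} (∫_0^∞ Φ(t) t^{-1-(Q+γ)λ} dt) |x|_h^{(Q+γ)λ}` for `x ≠ 0`. -/
theorem roughHausdorff_test_function (n : ℕ) (q γ lam : ℝ) (hq : 1 < q)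
    (hγ : -(2*(n:ℝ)+2) < γ) (hlam1 : -(1/q) < lam) (hlam2 : lam < 0)
    (σ : Measure (Fin (2*n+1) → ℝ))
    (hσ : ∀ᵐ y ∂σ, hnorm n y = 1)
    (Φ : ℝ → ℝ) (hΦm : Measurable Φ) (hΦ0 : ∀ t, 0 ≤ Φ t)
    (hΦint : IntegrableOn (fun t => Φ t * t ^ (-1 - ((2*(n:ℝ)+2) + γ) * lam)) (Ioi 0))
    (Ω : (Fin (2*n+1) → ℝ) → ℂ) (hΩm : Measurable Ω)
    (hΩint : Integrable (fun y => ‖Ω y‖ ^ (q/(q-1))) σ)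
    (f : (Fin (2*n+1) → ℝ) → ℂ)
    (hf : ∀ x, f x = (((hnorm n x ^ (((2*(n:ℝ)+2)+γ) * lam) *
            ‖Ω (dil n (hnorm n x)⁻¹ x)‖ ^ (q/(q-1) - 2) : ℝ) : ℂ) *
          (starRingEnd ℂ) (Ω (dil n (hnorm n x)⁻¹ x)))) :
    ∀ x : Fin (2*n+1) → ℝ, x ≠ 0 →
      roughHausdorff n Φ Ω σ f x =
        (((∫ y, ‖Ω y‖ ^ (q/(q-1)) ∂σ) *
            (∫ t in Ioi (0:ℝ), Φ t * t ^ (-1 - ((2*(n:ℝ)+2) + γ) * lam)) *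
            hnorm n x ^ (((2*(n:ℝ)+2) + γ) * lam) : ℝ) : ℂ) :=
  roughHausdorff_test_function_general n q γ lam hq σ hσ Φ Ω f hf
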